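/- Let C and D be model categories, and let L : D ⥤ C be a functor that preserves all small colimits and sends cofibrations of D to cofibrations of C (for instance, a left Quillen functor). Let X : Δᵒᵖ ⥤ C be a simplicial object in C, let ι*X : Δ₀ᵒᵖ ⥤ C denote its restriction along the inclusion Δ₀ ⊆ Δ, and suppose there is a diagram Y : Δ₀ᵒᵖ ⥤ D all of whose latching maps Lₙ(Y) ⟶ Y([n]) are cofibrations in D, together with a natural isomorphism Y ⋙ L ≅ ι*X. Then every latching map Lₙ(X) ⟶ X([n]) of X is a cofibration in C; that is, X is Reedy cofibrant. -/

import Mathlib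

open CategoryTheory CategoryTheory.Limits Opposite

universe v v' u u'

/-! ### The subcategory `Δ₀` of the simplex category and latching objects -/

/-- The subcategory `Δ₀` of the simplex category `Δ` with the same objects and those
monotone maps `f` with `f 0 = 0`.  Every epimorphism of `Δ` lies in `Δ₀`. -/
structure Delta0 : Type where
  toObj : SimplexCategory

instance : Category.{0} Delta0 where
  Hom a b := { f : a.toObj ⟶ b.toObj // f.toOrderHom 0 = 0 }
  id a := ⟨𝟙 a.toObj, rfl⟩
  comp f g := ⟨f.1 ≫ g.1, by
    simp only [SimplexCategory.comp_toOrderHom, OrderHom.comp_coe, Function.comp_apply, f.2, g.2]⟩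

/-- The inclusion functor `Δ₀ ⥤ Δ`. -/
def Delta0.incl : Delta0 ⥤ SimplexCategory where
  obj a := a.toObj
  map f := f.1

/-- The index category for the `n`-th latching object: its objects are the non-identity
epimorphisms `α : [n] ↠ [k]` of `Δ` (all of which lie in `Δ₀`), and a morphism `α ⟶ α′`
is an epimorphism `φ : [k′] ↠ [k]` with `α′ ≫ φ = α` (i.e. the opposite of the category
whose morphisms `α → α′` are the epimorphisms `φ` with `φ ∘ α = α′`, so that the diagram
below is covariant). -/
structure LatchingIndex (n : Delta0) : Type where
  k : Delta0
  π : n ⟶ k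
  epi : Epi π.1
  not_identity : ¬ IsIso π.1

instance (n : Delta0) : Category.{0} (LatchingIndex n) where
  Hom a b := { φ : b.k ⟶ a.k // b.π ≫ φ = a.π ∧ Epi φ.1 }
  id a := ⟨𝟙 a.k, by simp, show Epi (𝟙 a.k.toObj) from inferInstance⟩
  comp {a b c} f g := ⟨g.1 ≫ f.1, by
      rw [← Category.assoc, g.2.1, f.2.1],
    by
      haveI := g.2.2
      haveI := f.2.2
      exact epi_comp _ _⟩

variable {E : Type u} [Category.{v} E]

/-- The latching diagram of a `Δ₀ᵒᵖ`-shaped diagram in `E` at `[n]`, sending a non-identity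
epimorphism `α : [n] ↠ [k]` to `X [k]`. -/
def latchingDiagram (X : Delta0ᵒᵖ ⥤ E) (n : Delta0) : LatchingIndex n ⥤ E where
  obj a := X.obj (op a.k)
  map f := X.map f.1.op
  map_id a := by
    show X.map (𝟙 a.k).op = _
    rw [op_id, X.map_id]
  map_comp {a b c} f g := by
    show X.map (g.1 ≫ f.1).op = _
    rw [op_comp, X.map_comp]

/-- The cocone on the latching diagram with vertex `X [n]` whose components are the maps
`X α : X [k] ⟶ X [n]`. -/
def latchingCocone (X : Delta0ᵒᵖ ⥤ E) (n : Delta0) : Cocone (latchingDiagram X n) where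
  pt := X.obj (op n)
  ι :=
    { app := fun a => X.map a.π.op
      naturality := fun a b f => by
        dsimp [latchingDiagram]
        rw [← X.map_comp, ← op_comp, f.2.1, Category.comp_id] }

/-- The `n`-th latching map `Lₙ(X) ⟶ X [n]` of a `Δ₀ᵒᵖ`-shaped diagram. -/
noncomputable def latchingMap [HasColimits E] (X : Delta0ᵒᵖ ⥤ E) (n : Delta0) :
    colimit (latchingDiagram X n) ⟶ X.obj (op n) :=
  colimit.desc (latchingDiagram X n) (latchingCocone X n)

/-! ### Model categories -/

/-- A class of morphisms is stable under retracts if whenever `f` is a retract of `g`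
(in the arrow category) and `g` lies in the class, so does `f`. -/
def StableUnderRetracts (P : MorphismProperty E) : Prop :=
  ∀ ⦃A B A' B' : E⦄ (f : A ⟶ B) (g : A' ⟶ B')
    (iA : A ⟶ A') (rA : A' ⟶ A) (iB : B ⟶ B') (rB : B' ⟶ B),
    iA ≫ rA = 𝟙 A → iB ≫ rB = 𝟙 B → iA ≫ g = f ≫ iB → g ≫ rB = rA ≫ f →
    P g → P f

/-- A model structure on a bicomplete category `E`: classes of weak equivalences,
cofibrations and fibrations satisfying Quillen's axioms (two-out-of-three, closure under
retracts, lifting, and factorization). -/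
structure ModelStructure (E : Type u) [Category.{v} E] where
  weq : MorphismProperty E
  cof : MorphismProperty E
  fib : MorphismProperty E
  weq_two_out_of_three : weq.HasTwoOutOfThreeProperty
  weq_retract : StableUnderRetracts weq
  cof_retract : StableUnderRetracts cof
  fib_retract : StableUnderRetracts fib
  lift_cof_trivFib : ∀ ⦃A B X Y : E⦄ (i : A ⟶ B) (p : X ⟶ Y),
    cof i → fib p → weq p → HasLiftingProperty i p
  lift_trivCof_fib : ∀ ⦃A B X Y : E⦄ (i : A ⟶ B) (p : X ⟶ Y),
    cof i → weq i → fib p → HasLiftingProperty i p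
  factor_cof_trivFib : ∀ ⦃X Y : E⦄ (f : X ⟶ Y), ∃ (Z : E) (g : X ⟶ Z) (h : Z ⟶ Y),
    g ≫ h = f ∧ cof g ∧ fib h ∧ weq h
  factor_trivCof_fib : ∀ ⦃X Y : E⦄ (f : X ⟶ Y), ∃ (Z : E) (g : X ⟶ Z) (h : Z ⟶ Y),
    g ≫ h = f ∧ cof g ∧ weq g ∧ fib h

/-! Latching objects are colimits, so the colimit-preserving `L` carries the latching map of `Y`
to that of `Y ⋙ L ≅ ι*X` up to isomorphism of arrows; cofibrations, being closed under
retracts, are invariant under such isomorphisms. -/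

theorem StableUnderRetracts.isStableUnderRetracts {P : MorphismProperty E}
    (hP : StableUnderRetracts P) : P.IsStableUnderRetracts where
  of_retract h hg :=
    hP _ _ h.i.left h.r.left h.i.right h.r.right h.retract_left h.retract_right h.i_w
      h.r_w.symm hg

def latchingDiagramIso {X X' : Delta0ᵒᵖ ⥤ E} (e : X ≅ X') (n : Delta0) :
    latchingDiagram X n ≅ latchingDiagram X' n :=
  NatIso.ofComponents (fun a => e.app (op a.k)) (fun f => e.hom.naturality f.1.op)

section

variable [HasColimits E]

noncomputable def latchingMapArrowIso {X X' : Delta0ᵒᵖ ⥤ E} (e : X ≅ X') (n : Delta0) :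
    Arrow.mk (latchingMap X n) ≅ Arrow.mk (latchingMap X' n) :=
  Arrow.isoMk (HasColimit.isoOfNatIso (latchingDiagramIso e n)) (e.app (op n)) (by
    dsimp only [Arrow.mk_hom]
    refine colimit.hom_ext fun a => ?_
    simp only [latchingMap, latchingCocone, HasColimit.isoOfNatIso_hom_desc, colimit.ι_desc,
      Cocone.precompose_obj_pt, Cocone.precompose_obj_ι, NatTrans.comp_app,
      Functor.const_obj_obj, colimit.ι_desc_assoc]
    exact (e.hom.naturality a.π.op).symm)

noncomputable def latchingMapCompArrowIso {E' : Type u'} [Category.{v'} E'] [HasColimits E']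
    (Y : Delta0ᵒᵖ ⥤ E) (L : E ⥤ E') (n : Delta0) [PreservesColimit (latchingDiagram Y n) L] :
    Arrow.mk (latchingMap (Y ⋙ L) n) ≅ Arrow.mk (L.map (latchingMap Y n)) :=
  Arrow.isoMk (preservesColimitIso L (latchingDiagram Y n)).symm (Iso.refl _) (by
    dsimp only [Arrow.mk_hom, Iso.symm_hom, Iso.refl_hom]
    rw [Category.comp_id]
    exact preservesColimitIso_inv_comp_desc L _ (latchingCocone Y n))

end

theorem latching_cofibration_of_lift_general
    {C : Type u} [Category.{v} C] [HasColimits C]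
    {D : Type u'} [Category.{v'} D] [HasColimits D]
    (mC : ModelStructure C) (mD : ModelStructure D)
    (L : D ⥤ C) [PreservesColimits L]
    (hL : ∀ ⦃A B : D⦄ (f : A ⟶ B), mD.cof f → mC.cof (L.map f))
    (X : SimplexCategoryᵒᵖ ⥤ C) (Y : Delta0ᵒᵖ ⥤ D)
    (hY : ∀ n : Delta0, mD.cof (latchingMap Y n))
    (e : Y ⋙ L ≅ Delta0.incl.op ⋙ X) :
    ∀ n : Delta0, mC.cof (latchingMap (Delta0.incl.op ⋙ X) n) := by
  intro n
  have := mC.cof_retract.isStableUnderRetracts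
  have : PreservesColimitsOfSize.{0, 0} L := preservesColimitsOfSize_shrink L
  exact (mC.cof.arrow_mk_iso_iff
    ((latchingMapCompArrowIso Y L n).symm ≪≫ latchingMapArrowIso e n)).1 (hL _ (hY n))

/-- **Lifting Reedy cofibrancy along a colimit-preserving functor.**  Let `C` and `D` be
(bicomplete) model categories, and let `L : D ⥤ C` preserve all small colimits and send
cofibrations to cofibrations (e.g. a left Quillen functor).  Let `X : Δᵒᵖ ⥤ C` be a
simplicial object, `ι*X : Δ₀ᵒᵖ ⥤ C` its restriction along `Δ₀ ⊆ Δ`, and suppose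
`Y : Δ₀ᵒᵖ ⥤ D` has all latching maps cofibrations and `Y ⋙ L ≅ ι*X`.  Then every latching
map of `X` (equivalently, of `ι*X`, since latching objects only involve the epimorphisms of
`Δ`, all of which lie in `Δ₀`) is a cofibration in `C`; that is, `X` is Reedy cofibrant. -/
theorem latching_cofibration_of_lift
    {C : Type u} [Category.{v} C] [HasLimits C] [HasColimits C]
    {D : Type u'} [Category.{v'} D] [HasLimits D] [HasColimits D]
    (mC : ModelStructure C) (mD : ModelStructure D)
    (L : D ⥤ C) [PreservesColimits L]
    (hL : ∀ ⦃A B : D⦄ (f : A ⟶ B), mD.cof f → mC.cof (L.map f))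
    (X : SimplexCategoryᵒᵖ ⥤ C) (Y : Delta0ᵒᵖ ⥤ D)
    (hY : ∀ n : Delta0, mD.cof (latchingMap Y n))
    (e : Y ⋙ L ≅ Delta0.incl.op ⋙ X) :
    ∀ n : Delta0, mC.cof (latchingMap (Delta0.incl.op ⋙ X) n) :=
  latching_cofibration_of_lift_general mC mD L hL X Y hY e
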